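/- Let G be a connected graph with minimum degree at least 3, v a vertex of G, and u any cut vertex of G. Then any non-backtracking walk W from v to u is revealed by v. -/

import Mathlib

open SimpleGraph

variable {V : Type*}

/-- A walk is non-backtracking if no vertex equals the vertex two steps later. -/
def NonBacktracking {G : SimpleGraph V} {u v : V} (p : G.Walk u v) : Prop :=
  ∀ i : ℕ, i + 2 < p.support.length → p.support[i]? ≠ p.support[i + 2]?

/-- The weight of a walk: the sum of the weights of its edges, with multiplicity. -/
def walkWeight {G : SimpleGraph V} (F : Sym2 V → ℝ) {u v : V} (p : G.Walk u v) : ℝ :=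
  (p.edges.map F).sum

/-- An edge `e` is revealed by a set `S` of vertices if an integer combination of weights of
closed non-backtracking walks from vertices of `S` equals a nonzero multiple of the weight
of `e`, for every weight function. -/
def RevealedBySet (G : SimpleGraph V) (S : Set V) (e : Sym2 V) : Prop :=
  ∃ (l : ℕ) (w : Fin l → V) (W : ∀ i, G.Walk (w i) (w i)) (c : Fin l → ℤ) (ce : ℤ),
    (∀ i, w i ∈ S) ∧ (∀ i, NonBacktracking (W i)) ∧ (∀ i, c i ≠ 0) ∧ ce ≠ 0 ∧
    ∀ F : Sym2 V → ℝ, ∑ i, (c i : ℝ) * walkWeight F (W i) = (ce : ℝ) * F e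

/-- A walk `W` is revealed by the vertex `v`. -/
def WalkRevealedBy (G : SimpleGraph V) (v : V) {a b : V} (W : G.Walk a b) : Prop :=
  ∃ (l : ℕ) (Ws : Fin l → G.Walk v v) (c : Fin l → ℤ) (cW : ℤ),
    (∀ i, NonBacktracking (Ws i)) ∧ (∀ i, c i ≠ 0) ∧ cW ≠ 0 ∧
    ∀ F : Sym2 V → ℝ, ∑ i, (c i : ℝ) * walkWeight F (Ws i) = (cW : ℝ) * walkWeight F W

/-- `G` is odometric: every edge is revealed by every single vertex. -/
def Odometric (G : SimpleGraph V) : Prop :=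
  ∀ v : V, ∀ e ∈ G.edgeSet, RevealedBySet G {v} e

/-- `u` is a cut vertex of `G`. -/
def IsCutVertex (G : SimpleGraph V) (u : V) : Prop :=
  G.Connected ∧ ¬ (G.induce {x : V | x ≠ u}).Connected

/-- The induced subgraph on `B` is 2-connected. -/
def TwoConnectedOn (G : SimpleGraph V) (B : Set V) : Prop :=
  3 ≤ B.ncard ∧ (G.induce B).Connected ∧ ∀ u ∈ B, (G.induce (B \ {u})).Connected

/-- `B` is a maximal 2-connected block of `G`. -/
def IsBlock (G : SimpleGraph V) (B : Set V) : Prop :=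
  TwoConnectedOn G B ∧ ∀ B', B ⊆ B' → TwoConnectedOn G B' → B' = B

/-!
Since every degree is at least 3, a path from `u` through a neighbour `p` can always be continued
by an edge that neither backtracks nor returns to `u`. As soon as this edge hits the path,
returning to `u` along the path closes a non-backtracking walk `C_p` at `u` that leaves and
re-enters `u` through `p`. Take two neighbours `p ≠ q` of `u`, both different from the vertex
preceding `u` on `W`. Then `W C_p W⁻¹`, `W C_q W⁻¹` and `W C_p C_q W⁻¹` are closed
non-backtracking walks at `v`, and `F(W C_p W⁻¹) + F(W C_q W⁻¹) - F(W C_p C_q W⁻¹) = 2 F(W)`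
for every weight `F`.
-/

namespace SimpleGraph.Walk

variable {G : SimpleGraph V}

theorem not_nil_of_snd_ne {a b : V} {p : G.Walk a b} (h : p.snd ≠ a) : ¬ p.Nil := by
  rintro ⟨⟩
  exact h rfl

theorem snd_append_of_not_nil {a b c : V} {p : G.Walk a b} (hp : ¬ p.Nil) (q : G.Walk b c) :
    (p.append q).snd = p.snd := by
  cases p with
  | nil => simp at hp
  | cons h p' => simp

theorem penultimate_append_of_not_nil {a b c : V} (p : G.Walk a b) {q : G.Walk b c}
    (hq : ¬ q.Nil) : (p.append q).penultimate = q.penultimate := by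
  rw [← snd_reverse, reverse_append, snd_append_of_not_nil (by simpa using hq), snd_reverse]

end SimpleGraph.Walk

section NonBacktracking

variable {G : SimpleGraph V}

theorem nonBacktracking_cons_iff {a b c : V} {h : G.Adj a b} {p : G.Walk b c} :
    NonBacktracking (.cons h p) ↔ NonBacktracking p ∧ p.snd ≠ a := by
  have hlen := p.length_support
  have hsnd : 1 ≤ p.length → p.support[1]? = some p.snd := fun h1 =>
    (p.getVert_eq_support_getElem? h1).symm
  unfold NonBacktracking
  rw [Walk.support_cons]
  constructor
  · intro hcons
    refine ⟨fun i hi => hcons (i + 1) (by simp; omega), ?_⟩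
    cases p with
    | nil => exact h.ne'
    | cons h' q =>
      intro hsa
      exact hcons 0 (by simp) (by
        rw [List.getElem?_cons_zero, List.getElem?_cons_succ, hsnd (by simp), hsa])
  · rintro ⟨hp, hsa⟩ (_ | i) hi
    · simp only [List.length_cons] at hi
      simp [hsnd (by omega), hsa.symm]
    · exact hp i (by simpa using hi)

theorem NonBacktracking.reverse {a b : V} {p : G.Walk a b} (hp : NonBacktracking p) :
    NonBacktracking p.reverse := by
  intro i hi
  rw [Walk.support_reverse, List.length_reverse] at hi
  rw [Walk.support_reverse, List.getElem?_reverse (by omega), List.getElem?_reverse (by omega)]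
  have hidx : p.support.length - 1 - (i + 2) + 2 = p.support.length - 1 - i := by omega
  intro he
  exact hp (p.support.length - 1 - (i + 2)) (by omega) (by rw [hidx, he])

theorem SimpleGraph.Walk.IsPath.nonBacktracking {a b : V} {p : G.Walk a b} (hp : p.IsPath) :
    NonBacktracking p := by
  intro i hi he
  rw [List.getElem?_eq_getElem (by omega), List.getElem?_eq_getElem hi, Option.some_inj,
    hp.support_nodup.getElem_inj_iff] at he
  omega

theorem NonBacktracking.append {a b c : V} {p : G.Walk a b} {q : G.Walk b c}
    (hp : NonBacktracking p) (hq : NonBacktracking q) (hpq : p.penultimate ≠ q.snd) :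
    NonBacktracking (p.append q) := by
  induction p with
  | nil => exact hq
  | cons h p' ih =>
    rw [Walk.cons_append, nonBacktracking_cons_iff]
    rw [nonBacktracking_cons_iff] at hp
    cases p' with
    | nil => exact ⟨hq, hpq.symm⟩
    | cons h' r =>
      exact ⟨ih hp.1 hq hpq, (Walk.snd_append_of_not_nil Walk.not_nil_cons q).trans_ne hp.2⟩

theorem NonBacktracking.append_append_reverse {a b : V} {W : G.Walk a b} {C : G.Walk b b}
    (hW : NonBacktracking W) (hC : NonBacktracking C) (hCnil : ¬ C.Nil)
    (hsnd : C.snd ≠ W.penultimate) (hpen : C.penultimate ≠ W.penultimate) :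
    NonBacktracking (W.append (C.append W.reverse)) :=
  hW.append (hC.append hW.reverse (by rwa [Walk.snd_reverse]))
    (by rw [Walk.snd_append_of_not_nil hCnil]; exact hsnd.symm)

theorem walkWeight_append (F : Sym2 V → ℝ) {a b c : V} (p : G.Walk a b) (q : G.Walk b c) :
    walkWeight F (p.append q) = walkWeight F p + walkWeight F q := by
  simp only [walkWeight, Walk.edges_append, List.map_append, List.sum_append]

theorem walkWeight_reverse (F : Sym2 V → ℝ) {a b : V} (p : G.Walk a b) :
    walkWeight F p.reverse = walkWeight F p := by
  simp only [walkWeight, Walk.edges_reverse, List.map_reverse, List.sum_reverse]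

theorem walkWeight_append_append_reverse (F : Sym2 V → ℝ) {a b : V} (W : G.Walk a b)
    (C : G.Walk b b) :
    walkWeight F (W.append (C.append W.reverse)) = 2 * walkWeight F W + walkWeight F C := by
  rw [walkWeight_append, walkWeight_append, walkWeight_reverse]
  ring

end NonBacktracking

section MinDegree

variable {G : SimpleGraph V} [Fintype V] [DecidableRel G.Adj]

theorem exists_adj_notMem_of_card_lt_degree {y : V} {s : Finset V} (hs : s.card < G.degree y) :
    ∃ z, G.Adj y z ∧ z ∉ s := by
  rw [← G.card_neighborFinset_eq_degree] at hs
  obtain ⟨z, hz, hzs⟩ := Finset.exists_mem_notMem_of_card_lt_card hs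
  exact ⟨z, (G.mem_neighborFinset y z).1 hz, hzs⟩

theorem exists_closed_nonBacktracking_of_isPath (hdeg : ∀ x, 3 ≤ G.degree x) {u y : V}
    (P : G.Walk u y) (hP : P.IsPath) (hnil : ¬ P.Nil) :
    ∃ C : G.Walk u u, NonBacktracking C ∧ C.snd = P.snd ∧ C.penultimate = P.snd := by
  classical
  obtain ⟨z, hyz, hz⟩ := exists_adj_notMem_of_card_lt_degree (s := {P.penultimate, u})
    (Finset.card_le_two.trans_lt (hdeg y))
  simp only [Finset.mem_insert, Finset.mem_singleton, not_or] at hz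
  by_cases hzP : z ∈ P.support
  · have hT : ¬ (P.takeUntil z hzP).Nil := fun h => hz.2 h.eq.symm
    let Q := (P.takeUntil z hzP).concat hyz.symm
    have hQ : Q.IsPath := (hP.takeUntil hzP).concat
      (Walk.endpoint_notMem_support_takeUntil hP hzP hyz.ne) hyz.symm
    refine ⟨P.append Q.reverse, hP.nonBacktracking.append hQ.reverse.nonBacktracking ?_, ?_, ?_⟩
    · simpa [Q] using Ne.symm hz.1
    · exact Walk.snd_append_of_not_nil hnil _
    · rw [Walk.penultimate_append_of_not_nil _ (by simp [Q]), Walk.penultimate_reverse]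
      simp only [Q, Walk.concat_eq_append]
      rw [Walk.snd_append_of_not_nil hT, Walk.snd_takeUntil hz.2]
  · have := (hP.concat hzP hyz).length_lt
    obtain ⟨C, hC, hCsnd, hCpen⟩ :=
      exists_closed_nonBacktracking_of_isPath hdeg _ (hP.concat hzP hyz)
        (Walk.not_nil_of_ne (Ne.symm hz.2))
    rw [Walk.concat_eq_append, Walk.snd_append_of_not_nil hnil] at hCsnd hCpen
    exact ⟨C, hC, hCsnd, hCpen⟩
termination_by Fintype.card V - P.length
decreasing_by simp only [Walk.length_concat] at this ⊢; omega

theorem exists_closed_nonBacktracking (hdeg : ∀ x, 3 ≤ G.degree x) {u p : V} (h : G.Adj u p) :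
    ∃ C : G.Walk u u, NonBacktracking C ∧ C.snd = p ∧ C.penultimate = p :=
  exists_closed_nonBacktracking_of_isPath hdeg h.toWalk h.isPath_toWalk Walk.not_nil_cons

end MinDegree

theorem walk_to_cutVertex_revealed_general {G : SimpleGraph V} [Fintype V] [DecidableRel G.Adj]
    (hdeg : ∀ x, 3 ≤ G.degree x)
    (v u : V) (W : G.Walk v u) (hW : NonBacktracking W) :
    WalkRevealedBy G v W := by
  classical
  obtain ⟨p, hup, hp⟩ := exists_adj_notMem_of_card_lt_degree (s := {W.penultimate})
    ((Finset.card_singleton _).trans_lt (by linarith [hdeg u]))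
  obtain ⟨q, huq, hq⟩ := exists_adj_notMem_of_card_lt_degree (s := {W.penultimate, p})
    (Finset.card_le_two.trans_lt (hdeg u))
  simp only [Finset.mem_insert, Finset.mem_singleton, not_or] at hp hq
  obtain ⟨Cp, hCp, hCp_snd, hCp_pen⟩ := exists_closed_nonBacktracking hdeg hup
  obtain ⟨Cq, hCq, hCq_snd, hCq_pen⟩ := exists_closed_nonBacktracking hdeg huq
  have hCp_nil : ¬ Cp.Nil := Walk.not_nil_of_snd_ne (hCp_snd ▸ hup.ne')
  have hCq_nil : ¬ Cq.Nil := Walk.not_nil_of_snd_ne (hCq_snd ▸ huq.ne')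
  have hCpq : NonBacktracking (Cp.append Cq) :=
    hCp.append hCq (by rw [hCp_pen, hCq_snd]; exact Ne.symm hq.2)
  have hCpq_snd : (Cp.append Cq).snd = p := by rw [Walk.snd_append_of_not_nil hCp_nil, hCp_snd]
  have hCpq_pen : (Cp.append Cq).penultimate = q := by
    rw [Walk.penultimate_append_of_not_nil _ hCq_nil, hCq_pen]
  refine ⟨3, ![W.append (Cp.append W.reverse), W.append (Cq.append W.reverse),
    W.append ((Cp.append Cq).append W.reverse)], ![1, 1, -1], 2, fun i => ?_, fun i => ?_,
    two_ne_zero, fun F => ?_⟩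
  · fin_cases i
    · exact hW.append_append_reverse hCp hCp_nil (hCp_snd ▸ hp) (hCp_pen ▸ hp)
    · exact hW.append_append_reverse hCq hCq_nil (hCq_snd ▸ hq.1) (hCq_pen ▸ hq.1)
    · exact hW.append_append_reverse hCpq (Walk.not_nil_of_snd_ne (hCpq_snd ▸ hup.ne'))
        (hCpq_snd ▸ hp) (hCpq_pen ▸ hq.1)
  · fin_cases i <;> norm_num
  · simp only [Fin.sum_univ_three, Matrix.cons_val_zero, Matrix.cons_val_one, Matrix.head_cons,
      Matrix.cons_val_two, Matrix.tail_cons, walkWeight_append_append_reverse]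
    rw [walkWeight_append]
    push_cast
    ring

/-- in a connected graph of minimum degree at least 3, any non-backtracking walk
from a vertex `v` to any cut vertex `u` is revealed by `v`. -/
theorem walk_to_cutVertex_revealed {G : SimpleGraph V} [Fintype V] [DecidableRel G.Adj]
    (hconn : G.Connected) (hdeg : ∀ x, 3 ≤ G.degree x)
    (v u : V) (hu : IsCutVertex G u) (W : G.Walk v u) (hW : NonBacktracking W) :
    WalkRevealedBy G v W :=
  walk_to_cutVertex_revealed_general hdeg v u W hW
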